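/- For n ≥ 2, let M(n+j, j) = ∑_{n_1+⋯+n_j = n+j, n_i ≥ 2} (n+j)!/(n_1!⋯n_j!), the multinomial sum over compositions of n+j into j parts, all at least 2. Then (1/n!) ∑_{j=2}^{n} ((−1)^j / j!) · M(n+j, j) = (−1)^n + 1/n!. -/
import Mathlib

/-- `M N t` = ∑ over `(n₁,…,n_t)` with `n₁+⋯+n_t = N`, all `nᵢ ≥ 2`, of `N!/(n₁!⋯n_t!)`. -/
def Msum (N t : ℕ) : ℕ :=
  ∑ c ∈ (Finset.Nat.antidiagonalTuple t N).filter (fun c => ∀ i, 2 ≤ c i),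
    Nat.multinomial Finset.univ c

open Finset

lemma Msum_eq_zero {N t : ℕ} (h : N < 2 * t) : Msum N t = 0 := by
  rw [Msum, Finset.filter_false_of_mem, Finset.sum_empty]
  intro c hc hall
  rw [Finset.Nat.mem_antidiagonalTuple] at hc
  have : (Finset.univ : Finset (Fin t)).card • 2 ≤ ∑ i, c i :=
    Finset.card_nsmul_le_sum _ _ _ (fun i _ => hall i)
  simp only [Finset.card_univ, Fintype.card_fin, smul_eq_mul] at this
  omega

lemma Msum_one {N : ℕ} (h : 2 ≤ N) : Msum N 1 = 1 := by
  rw [Msum, Finset.Nat.antidiagonalTuple_one]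
  rw [Finset.filter_true_of_mem]
  · rw [Finset.sum_singleton]
    have : (Finset.univ : Finset (Fin 1)) = {0} := rfl
    rw [this, Nat.multinomial_singleton]
  · intro c hc
    rw [Finset.mem_singleton] at hc
    subst hc
    intro i
    have : i = 0 := Subsingleton.elim _ _
    subst this
    simpa using h

lemma multinomial_cast {α : Type*} (s : Finset α) (f : α → ℕ) :
    (Nat.multinomial s f : ℚ) = (∑ i ∈ s, f i).factorial / ∏ i ∈ s, ((f i).factorial : ℚ) := by
  have h := Nat.multinomial_spec s f
  have hne : (∏ i ∈ s, ((f i).factorial : ℚ)) ≠ 0 := by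
    apply Finset.prod_ne_zero_iff.2
    intro i _
    exact_mod_cast (Nat.factorial_pos _).ne'
  rw [eq_div_iff hne, mul_comm]
  push_cast [← h]
  ring

lemma fact_cast_ne {α : Type*} (s : Finset α) (f : α → ℕ) :
    (∏ i ∈ s, ((f i).factorial : ℚ)) ≠ 0 := by
  apply Finset.prod_ne_zero_iff.2
  intro i _
  exact_mod_cast (Nat.factorial_pos _).ne'

lemma multinomial_pascal {t : ℕ} (c : Fin (t+1) → ℕ) (hc : ∀ i, 1 ≤ c i) :
    (Nat.multinomial Finset.univ c : ℚ)
      = ∑ i, (Nat.multinomial Finset.univ (Function.update c i (c i - 1)) : ℚ) := by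
  classical
  set S := ∑ i, c i with hS
  have hS1 : 1 ≤ S :=
    le_trans (hc 0) (Finset.single_le_sum (f := c) (fun i _ => Nat.zero_le _) (Finset.mem_univ 0))
  have key : ∀ i : Fin (t+1), (Nat.multinomial Finset.univ (Function.update c i (c i - 1)) : ℚ)
      = (S-1).factorial * c i / ∏ j, ((c j).factorial : ℚ) := by
    intro i
    rw [multinomial_cast]
    have hsumerase : ∑ j ∈ Finset.univ.erase i, c j + c i = S :=
      Finset.sum_erase_add _ _ (Finset.mem_univ i)
    have hsum : ∑ j, Function.update c i (c i - 1) j = S - 1 := by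
      rw [Finset.sum_update_of_mem (Finset.mem_univ i), Finset.sdiff_singleton_eq_erase]
      have := hc i
      omega
    have hupd : (fun j => ((Function.update c i (c i -1) j).factorial : ℚ))
       = Function.update (fun j => ((c j).factorial : ℚ)) i ((c i -1).factorial : ℚ) := by
      funext j
      by_cases h : j = i
      · subst h; simp
      · simp [Function.update_of_ne h]
    have hprodeq : ∏ j, ((Function.update c i (c i -1) j).factorial : ℚ)
        = ((c i - 1).factorial : ℚ) * ∏ j ∈ Finset.univ.erase i, ((c j).factorial : ℚ) := by
      rw [hupd, Finset.prod_update_of_mem (Finset.mem_univ i), Finset.sdiff_singleton_eq_erase]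
    have hfac : ((c i).factorial : ℕ) = c i * (c i - 1).factorial := by
      have h1 : c i - 1 + 1 = c i := by have := hc i; omega
      calc (c i).factorial = (c i - 1 + 1).factorial := by rw [h1]
        _ = (c i - 1 + 1) * (c i - 1).factorial := Nat.factorial_succ _
        _ = c i * (c i - 1).factorial := by rw [h1]
    have hP : (∏ j, ((c j).factorial : ℚ))
        = (c i) * (((c i -1).factorial : ℚ) * ∏ j ∈ Finset.univ.erase i, ((c j).factorial : ℚ)) := by
      rw [← Finset.prod_erase_mul _ _ (Finset.mem_univ i), hfac]
      push_cast
      ring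
    rw [hsum, hprodeq, hP]
    have h1 : ((c i - 1).factorial : ℚ) ≠ 0 := by exact_mod_cast (Nat.factorial_pos _).ne'
    have h2 : (∏ j ∈ Finset.univ.erase i, ((c j).factorial : ℚ)) ≠ 0 := fact_cast_ne _ _
    have h3 : ((c i : ℚ)) ≠ 0 := by
      have : c i ≠ 0 := by have := hc i; omega
      exact_mod_cast this
    field_simp
  rw [Finset.sum_congr rfl (fun i _ => key i), multinomial_cast, ← Finset.sum_div, ← Finset.mul_sum]
  have hcast : ∑ i, ((c i : ℚ)) = (S : ℚ) := by push_cast [hS]; ring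
  have hfS : (S.factorial : ℚ) = (S-1).factorial * S := by
    have h1 : S - 1 + 1 = S := by omega
    calc (S.factorial : ℚ) = ((S - 1 + 1).factorial : ℚ) := by rw [h1]
      _ = ((S - 1 + 1) * (S - 1).factorial : ℕ) := by rw [Nat.factorial_succ]
      _ = (S-1).factorial * S := by push_cast [h1]; ring
  rw [hcast, ← hS, hfS]

lemma mult_insert_value {t N : ℕ} (hN : 2 ≤ N) (i : Fin (t+1)) (d : Fin t → ℕ)
    (hd : ∑ k, d k = N - 2) :
    (Nat.multinomial Finset.univ (i.insertNth 1 d) : ℚ)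
      = (N - 1 : ℕ) * (Nat.multinomial Finset.univ d : ℚ) := by
  rw [multinomial_cast, multinomial_cast]
  have hsum : ∑ j, i.insertNth (α := fun _ => ℕ) 1 d j = N - 1 := by
    rw [Fin.sum_univ_succAbove _ i, Fin.insertNth_apply_same]
    rw [Finset.sum_congr rfl
      (fun k _ => Fin.insertNth_apply_succAbove (α := fun _ => ℕ) i 1 d k)]
    have hd' : Finset.univ.sum d = N - 2 := hd
    omega
  have hprod : ∏ j, ((i.insertNth (α := fun _ => ℕ) 1 d j).factorial : ℚ)
      = ∏ k, ((d k).factorial : ℚ) := by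
    rw [Fin.prod_univ_succAbove _ i, Fin.insertNth_apply_same]
    rw [Finset.prod_congr rfl (fun k _ => by
      rw [Fin.insertNth_apply_succAbove (α := fun _ => ℕ) i 1 d k])]
    norm_num
  rw [hsum, hprod, hd]
  have hfac : ((N-1).factorial : ℚ) = (N-1 : ℕ) * ((N-2).factorial : ℚ) := by
    have h1 : N - 2 + 1 = N - 1 := by omega
    calc ((N-1).factorial : ℚ) = ((N - 2 + 1).factorial : ℚ) := by rw [h1]
      _ = ((N - 2 + 1) * (N-2).factorial : ℕ) := by rw [Nat.factorial_succ]
      _ = (N-1 : ℕ) * ((N-2).factorial : ℚ) := by push_cast [h1]; ring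
  rw [hfac, mul_div_assoc]

lemma Msum_inner_sum (t N : ℕ) (hN : 2 ≤ N) (i : Fin (t+1)) :
    ∑ c ∈ (Finset.Nat.antidiagonalTuple (t+1) N).filter (fun c => ∀ j, 2 ≤ c j),
      (Nat.multinomial Finset.univ (Function.update c i (c i - 1)) : ℚ)
    = (Msum (N-1) (t+1) : ℚ) + (N-1 : ℕ) * (Msum (N-2) t : ℚ) := by
  classical
  have stepC : ∑ c ∈ (Finset.Nat.antidiagonalTuple (t+1) N).filter (fun c => ∀ j, 2 ≤ c j),
      (Nat.multinomial Finset.univ (Function.update c i (c i - 1)) : ℚ)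
    = ∑ c ∈ (Finset.Nat.antidiagonalTuple (t+1) (N-1)).filter
        (fun c => 1 ≤ c i ∧ ∀ j, j ≠ i → 2 ≤ c j),
      (Nat.multinomial Finset.univ c : ℚ) := by
    apply Finset.sum_nbij' (fun c => Function.update c i (c i - 1))
      (fun c => Function.update c i (c i + 1))
    · intro c hc
      rw [Finset.mem_filter, Finset.Nat.mem_antidiagonalTuple] at hc ⊢
      obtain ⟨hsum, hall⟩ := hc
      have h2 := hall i
      refine ⟨?_, ?_, ?_⟩
      · rw [Finset.sum_update_of_mem (Finset.mem_univ i), Finset.sdiff_singleton_eq_erase]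
        have he : ∑ j ∈ Finset.univ.erase i, c j + c i = N := by
          rw [Finset.sum_erase_add _ _ (Finset.mem_univ i)]; exact hsum
        omega
      · simp only [Function.update_self]; omega
      · intro j hj
        rw [Function.update_of_ne hj]; exact hall j
    · intro c hc
      rw [Finset.mem_filter, Finset.Nat.mem_antidiagonalTuple] at hc ⊢
      obtain ⟨hsum, h1, hall⟩ := hc
      refine ⟨?_, ?_⟩
      · rw [Finset.sum_update_of_mem (Finset.mem_univ i), Finset.sdiff_singleton_eq_erase]
        have he : ∑ j ∈ Finset.univ.erase i, c j + c i = N - 1 := by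
          rw [Finset.sum_erase_add _ _ (Finset.mem_univ i)]; exact hsum
        omega
      · intro j
        by_cases hj : j = i
        · subst hj; simp only [Function.update_self]; omega
        · rw [Function.update_of_ne hj]; exact hall j hj
    · intro c hc
      rw [Finset.mem_filter] at hc
      have h2 := hc.2 i
      rw [Function.update_idem, Function.update_self]
      have : c i - 1 + 1 = c i := by omega
      rw [this, Function.update_eq_self]
    · intro c hc
      rw [Finset.mem_filter] at hc
      rw [Function.update_idem, Function.update_self]
      have : c i + 1 - 1 = c i := by omega
      rw [this, Function.update_eq_self]
    · intro c _; rfl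
  rw [stepC, ← Finset.sum_filter_add_sum_filter_not
      ((Finset.Nat.antidiagonalTuple (t+1) (N-1)).filter
        (fun c => 1 ≤ c i ∧ ∀ j, j ≠ i → 2 ≤ c j)) (fun c => 2 ≤ c i)]
  congr 1
  · -- part 1 : full condition
    rw [Finset.filter_filter]
    have hset : ((Finset.Nat.antidiagonalTuple (t+1) (N-1)).filter
        (fun c => (1 ≤ c i ∧ ∀ j, j ≠ i → 2 ≤ c j) ∧ 2 ≤ c i))
        = (Finset.Nat.antidiagonalTuple (t+1) (N-1)).filter (fun c => ∀ j, 2 ≤ c j) := by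
      apply Finset.filter_congr
      intro c _
      constructor
      · rintro ⟨⟨_, hall⟩, h2⟩ j
        by_cases hj : j = i
        · subst hj; exact h2
        · exact hall j hj
      · intro h
        exact ⟨⟨by have := h i; omega, fun j _ => h j⟩, h i⟩
    rw [hset, Msum]
    push_cast
    rfl
  · -- part 2 : c i = 1
    rw [Finset.filter_filter]
    have hset : ((Finset.Nat.antidiagonalTuple (t+1) (N-1)).filter
        (fun c => (1 ≤ c i ∧ ∀ j, j ≠ i → 2 ≤ c j) ∧ ¬ 2 ≤ c i))
        = (Finset.Nat.antidiagonalTuple (t+1) (N-1)).filter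
            (fun c => c i = 1 ∧ ∀ j, j ≠ i → 2 ≤ c j) := by
      apply Finset.filter_congr
      intro c _
      constructor
      · rintro ⟨⟨h1, hall⟩, h2⟩
        exact ⟨by omega, hall⟩
      · rintro ⟨h1, hall⟩
        exact ⟨⟨by omega, hall⟩, by omega⟩
    rw [hset]
    have : ∑ c ∈ (Finset.Nat.antidiagonalTuple (t+1) (N-1)).filter
            (fun c => c i = 1 ∧ ∀ j, j ≠ i → 2 ≤ c j),
          (Nat.multinomial Finset.univ c : ℚ)
        = ∑ d ∈ (Finset.Nat.antidiagonalTuple t (N-2)).filter (fun d => ∀ k, 2 ≤ d k),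
          ((N-1 : ℕ) * (Nat.multinomial Finset.univ d : ℚ)) := by
      apply Finset.sum_nbij' (fun c => i.removeNth c) (fun d => i.insertNth 1 d)
      · intro c hc
        rw [Finset.mem_filter, Finset.Nat.mem_antidiagonalTuple] at hc ⊢
        obtain ⟨hsum, h1, hall⟩ := hc
        rw [Fin.sum_univ_succAbove _ i] at hsum
        refine ⟨by simp only [Fin.removeNth]; omega, fun k => ?_⟩
        exact hall _ (Fin.succAbove_ne i k)
      · intro d hd
        rw [Finset.mem_filter, Finset.Nat.mem_antidiagonalTuple] at hd ⊢
        obtain ⟨hsum, hall⟩ := hd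
        refine ⟨?_, Fin.insertNth_apply_same _ _ _, fun j hj => ?_⟩
        · rw [Fin.sum_univ_succAbove _ i, Fin.insertNth_apply_same]
          rw [Finset.sum_congr rfl
            (fun k _ => Fin.insertNth_apply_succAbove (α := fun _ => ℕ) i 1 d k)]
          have hsum' : Finset.univ.sum d = N - 2 := hsum
          omega
        · obtain ⟨k, rfl⟩ := Fin.exists_succAbove_eq hj
          rw [Fin.insertNth_apply_succAbove]
          exact hall k
      · intro c hc
        rw [Finset.mem_filter] at hc
        have h3 := Fin.insertNth_self_removeNth i c
        rw [hc.2.1] at h3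
        exact h3
      · intro d _
        funext k
        simp only [Fin.removeNth]
        exact Fin.insertNth_apply_succAbove (α := fun _ => ℕ) i 1 d k
      · intro c hc
        rw [Finset.mem_filter, Finset.Nat.mem_antidiagonalTuple] at hc
        obtain ⟨hsum, h1, hall⟩ := hc
        have hd : ∑ k, i.removeNth c k = N - 2 := by
          rw [Fin.sum_univ_succAbove _ i] at hsum
          simp only [Fin.removeNth]
          omega
        have hv := mult_insert_value hN i (i.removeNth c) hd
        have h2 : i.insertNth 1 (i.removeNth c) = c := by
          have h3 := Fin.insertNth_self_removeNth i c
          rw [h1] at h3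
          exact h3
        calc (Nat.multinomial Finset.univ c : ℚ)
            = (Nat.multinomial Finset.univ (i.insertNth 1 (i.removeNth c)) : ℚ) := by rw [h2]
          _ = (N-1 : ℕ) * (Nat.multinomial Finset.univ (i.removeNth c) : ℚ) := hv
    rw [this, ← Finset.mul_sum, Msum]
    push_cast
    rfl

lemma Msum_rec (t n : ℕ) :
    (Msum (n+2) (t+1) : ℚ)
      = (t+1) * (Msum (n+1) (t+1) : ℚ) + (t+1) * (n+1) * (Msum n t : ℚ) := by
  have hN : 2 ≤ n + 2 := by omega
  have h1 : (Msum (n+2) (t+1) : ℚ)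
      = ∑ c ∈ (Finset.Nat.antidiagonalTuple (t+1) (n+2)).filter (fun c => ∀ j, 2 ≤ c j),
          (Nat.multinomial Finset.univ c : ℚ) := by rw [Msum]; push_cast; rfl
  rw [h1]
  rw [Finset.sum_congr rfl (fun c hc => multinomial_pascal c (fun i => by
    rw [Finset.mem_filter] at hc
    have := hc.2 i
    omega))]
  rw [Finset.sum_comm]
  rw [Finset.sum_congr rfl (fun i _ => Msum_inner_sum t (n+2) hN i)]
  rw [Finset.sum_const, Finset.card_univ, Fintype.card_fin]
  have e1 : n + 2 - 1 = n + 1 := by omega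
  have e2 : n + 2 - 2 = n := by omega
  rw [e1, e2]
  push_cast
  ring

lemma Msum_rec' (j N : ℕ) (hj : 1 ≤ j) (hN : 2 ≤ N) :
    (Msum N j : ℚ) = (j : ℚ) * (Msum (N-1) j : ℚ)
      + (j : ℚ) * ((N-1 : ℕ) : ℚ) * (Msum (N-2) (j-1) : ℚ) := by
  obtain ⟨t, rfl⟩ : ∃ t, j = t+1 := ⟨j-1, by omega⟩
  obtain ⟨n, rfl⟩ : ∃ n, N = n+2 := ⟨N-2, by omega⟩
  have e1 : n+2-1 = n+1 := by omega
  have e2 : n+2-2 = n := by omega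
  have e3 : t+1-1 = t := by omega
  rw [e1, e2, e3, Msum_rec]
  push_cast
  ring

lemma Msum_step (m : ℕ) (hm : 2 ≤ m) :
    ∑ j ∈ Finset.Icc 2 (m+1), ((-1 : ℚ)^j / (j.factorial : ℚ)) * (Msum (m + 1 + j) j : ℚ)
      = (m+2 : ℚ) - (m+1 : ℚ) *
          ∑ j ∈ Finset.Icc 2 m, ((-1 : ℚ)^j / (j.factorial : ℚ)) * (Msum (m + j) j : ℚ) := by
  have hfne : ∀ j : ℕ, ((j.factorial : ℚ)) ≠ 0 :=
    fun j => by exact_mod_cast (Nat.factorial_pos j).ne'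
  calc
    ∑ j ∈ Finset.Icc 2 (m+1), ((-1 : ℚ)^j / (j.factorial : ℚ)) * (Msum (m + 1 + j) j : ℚ)
      = ∑ j ∈ Finset.Icc 2 (m+1),
          (((-1 : ℚ)^j * (j : ℚ) / (j.factorial : ℚ)) * (Msum (m + j) j : ℚ)
          + ((-1 : ℚ)^j * ((j : ℚ) * ((m : ℚ) + (j : ℚ))) / (j.factorial : ℚ))
              * (Msum (m + j - 1) (j - 1) : ℚ)) := by
        refine Finset.sum_congr rfl (fun j hj => ?_)
        rw [Finset.mem_Icc] at hj
        have h := Msum_rec' j (m+1+j) (by omega) (by omega)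
        have e1 : m+1+j-1 = m+j := by omega
        have e2 : m+1+j-2 = m+j-1 := by omega
        rw [h, e1, e2]
        push_cast
        ring
    _ = (∑ j ∈ Finset.Icc 2 (m+1), ((-1 : ℚ)^j * (j : ℚ) / (j.factorial : ℚ)) * (Msum (m + j) j : ℚ))
        + ∑ j ∈ Finset.Icc 2 (m+1),
            ((-1 : ℚ)^j * ((j : ℚ) * ((m : ℚ) + (j : ℚ))) / (j.factorial : ℚ))
              * (Msum (m + j - 1) (j - 1) : ℚ) := Finset.sum_add_distrib
    _ = (∑ j ∈ Finset.Icc 2 m, ((-1 : ℚ)^j * (j : ℚ) / (j.factorial : ℚ)) * (Msum (m + j) j : ℚ))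
        + ∑ j ∈ Finset.Icc 2 (m+1),
            ((-1 : ℚ)^j * ((j : ℚ) * ((m : ℚ) + (j : ℚ))) / (j.factorial : ℚ))
              * (Msum (m + j - 1) (j - 1) : ℚ) := by
        rw [Finset.sum_Icc_succ_top (by omega : 2 ≤ m + 1)]
        rw [Msum_eq_zero (by omega : m + (m+1) < 2 * (m+1))]
        norm_num
    _ = (∑ j ∈ Finset.Icc 2 m, ((-1 : ℚ)^j * (j : ℚ) / (j.factorial : ℚ)) * (Msum (m + j) j : ℚ))
        + ∑ k ∈ Finset.Icc 1 m,
            ((-1 : ℚ)^(k+1) * (((k:ℚ)+1) * ((m : ℚ) + (k : ℚ) + 1)) / (((k+1).factorial : ℚ)))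
              * (Msum (m + k) k : ℚ) := by
        congr 1
        refine Finset.sum_nbij' (fun a => a - 1) (fun a => a + 1) ?_ ?_ ?_ ?_ ?_
        · intro a ha; rw [Finset.mem_Icc] at ha ⊢; omega
        · intro a ha; rw [Finset.mem_Icc] at ha ⊢; omega
        · intro a ha; rw [Finset.mem_Icc] at ha; omega
        · intro a ha; rw [Finset.mem_Icc] at ha; omega
        · intro a ha
          rw [Finset.mem_Icc] at ha
          obtain ⟨k, rfl⟩ : ∃ k, a = k + 2 := ⟨a - 2, by omega⟩
          have e1 : k + 2 - 1 = k + 1 := by omega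
          have e2 : m + (k+2) - 1 = m + (k + 1) := by omega
          have e3 : m + (k + 1) = m + k + 1 := by omega
          have e4 : (k + 1) + 1 = k + 2 := rfl
          rw [e1, e2, e3, e4]
          push_cast
          ring
    _ = (∑ j ∈ Finset.Icc 2 m, ((-1 : ℚ)^j * (j : ℚ) / (j.factorial : ℚ)) * (Msum (m + j) j : ℚ))
        + (((m : ℚ) + 2) + ∑ k ∈ Finset.Icc 2 m,
            ((-1 : ℚ)^(k+1) * (((k:ℚ)+1) * ((m : ℚ) + (k : ℚ) + 1)) / (((k+1).factorial : ℚ)))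
              * (Msum (m + k) k : ℚ)) := by
        congr 1
        have hins : Finset.Icc 1 m = insert 1 (Finset.Icc 2 m) := by
          ext x; simp only [Finset.mem_Icc, Finset.mem_insert]; omega
        rw [hins, Finset.sum_insert (by simp)]
        congr 1
        rw [Msum_one (by omega : 2 ≤ m + 1)]
        norm_num [Nat.factorial]
        ring
    _ = ((m : ℚ) + 2) + ∑ j ∈ Finset.Icc 2 m,
          (((-1 : ℚ)^j * (j : ℚ) / (j.factorial : ℚ)) * (Msum (m + j) j : ℚ)
          + ((-1 : ℚ)^(j+1) * (((j:ℚ)+1) * ((m : ℚ) + (j : ℚ) + 1)) / (((j+1).factorial : ℚ)))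
              * (Msum (m + j) j : ℚ)) := by
        rw [Finset.sum_add_distrib]
        ring
    _ = ((m : ℚ) + 2) + ∑ j ∈ Finset.Icc 2 m,
          (-((m:ℚ)+1)) * (((-1 : ℚ)^j / (j.factorial : ℚ)) * (Msum (m + j) j : ℚ)) := by
        congr 1
        refine Finset.sum_congr rfl (fun j hj => ?_)
        rw [Nat.factorial_succ, pow_succ]
        push_cast
        field_simp
        ring
    _ = (m+2 : ℚ) - (m+1 : ℚ) *
          ∑ j ∈ Finset.Icc 2 m, ((-1 : ℚ)^j / (j.factorial : ℚ)) * (Msum (m + j) j : ℚ) := by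
        rw [← Finset.mul_sum]
        ring

lemma Msum_alt (n : ℕ) (hn : 2 ≤ n) :
    ∑ j ∈ Finset.Icc 2 n, ((-1 : ℚ)^j / (j.factorial : ℚ)) * (Msum (n + j) j : ℚ)
      = (-1 : ℚ)^n * (n.factorial : ℚ) + 1 := by
  induction n with
  | zero => omega
  | succ m ih =>
    rcases Nat.lt_or_ge m 2 with hm | hm
    · have hm1 : m = 1 := by omega
      subst hm1
      rw [show Finset.Icc 2 2 = {2} from rfl, Finset.sum_singleton]
      rw [show Msum 4 2 = 6 from by decide]
      norm_num [Nat.factorial]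
    · rw [Msum_step m hm, ih hm]
      rw [Nat.factorial_succ]
      push_cast
      ring

theorem stmt_9 (n : ℕ) (hn : 2 ≤ n) :
    (1 / (n.factorial : ℚ)) *
        ∑ j ∈ Finset.Icc 2 n, ((-1 : ℚ) ^ j / (j.factorial : ℚ)) * (Msum (n + j) j : ℚ) =
      (-1 : ℚ) ^ n + 1 / (n.factorial : ℚ) := by
  rw [Msum_alt n hn]
  have hne : ((n.factorial : ℚ)) ≠ 0 := by exact_mod_cast (Nat.factorial_pos n).ne'
  field_simp
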